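/- arXiv:cs/0504003 — 2 statements merged into one kernel-verified Lean document; each statement's English description precedes it below -/
import Mathlib

section
/- Let b1 = (s2 + s3 + σT1·σT2)/(s0 + s2 + s3) and b2 = (s0 − σT1·σT2)/(s0 + s2 + s3), and define B̃3 = U1 − b1·X − b2·U'2. Then B̃3 has mean zero, E[B̃3·X] = 0, E[B̃3·U'2] = 0, and E[B̃3²] = (s0·(σT1 + σT2)² + s3·(s0 + s1)) / (s0 + s2 + s3). That is, B̃3 is the Gram–Schmidt residual of U1 against (X, U'2), with the stated linear MMSE error variance. -/
open MeasureTheory ProbabilityTheory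

/-!
Since `b1 + b2 = 1`, the residual is `B̃3 = A - b2 • B` with `A = T0 + T1 = U1 - X` and
`B = T0 + T2 + T3 = U'2 - X`, both uncorrelated with `X`. The coefficient `b2` is
`Cov(A, B) / Var B`, so `A - b2 • B` is the Gram–Schmidt residual of `A` against `B`: it is
orthogonal to `X` and to `B`, and its second moment is `Var A - Cov(A, B)² / Var B`, which
becomes the stated expression once `σT1² = s1` and `σT2² = s2`.
-/

lemma mul_div_sub_le_mul_div_sub {σ D D' : ℝ} (hσ : 0 < σ) (hD : D ≤ D') (hD' : D' < σ) :
    D * σ / (σ - D) ≤ D' * σ / (σ - D') := by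
  rw [div_le_div_iff₀ (by linarith) (by linarith)]
  nlinarith [mul_nonneg (mul_nonneg hσ.le hσ.le) (sub_nonneg.mpr hD)]

section GramSchmidt

variable {Ω : Type*} [MeasurableSpace Ω] {μ : Measure Ω} {X Y A B : Ω → ℝ}

lemma covariance_eq_integral_mul (hX : μ[X] = 0) (hY : μ[Y] = 0) :
    cov[X, Y; μ] = ∫ ω, X ω * Y ω ∂μ := by
  simp [covariance, hX, hY]

variable [IsFiniteMeasure μ]

lemma covariance_sub_smul_left (hA : MemLp A 2 μ) (hB : MemLp B 2 μ) (hY : MemLp Y 2 μ)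
    (c : ℝ) : cov[A - c • B, Y; μ] = cov[A, Y; μ] - c * cov[B, Y; μ] := by
  rw [covariance_sub_left hA (hB.const_smul c) hY, covariance_smul_left]

theorem integral_gramSchmidt_residual (hX : MemLp X 2 μ) (hA : MemLp A 2 μ)
    (hB : MemLp B 2 μ) (hXm : μ[X] = 0) (hAm : μ[A] = 0) (hBm : μ[B] = 0)
    (hXA : cov[X, A; μ] = 0) (hXB : cov[X, B; μ] = 0) (hBB : cov[B, B; μ] ≠ 0) :
    let R := A - (cov[A, B; μ] / cov[B, B; μ]) • B
    μ[R] = 0 ∧ ∫ ω, R ω * X ω ∂μ = 0 ∧ ∫ ω, R ω * (X + B) ω ∂μ = 0 ∧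
      ∫ ω, R ω ^ 2 ∂μ = cov[A, A; μ] - cov[A, B; μ] ^ 2 / cov[B, B; μ] := by
  set β := cov[A, B; μ] / cov[B, B; μ] with hβ
  intro R
  have hR : MemLp R 2 μ := hA.sub (hB.const_smul β)
  have hRm : μ[R] = 0 := by
    rw [integral_sub' (hA.integrable one_le_two) ((hB.const_smul β).integrable one_le_two)]
    simp only [Pi.smul_apply, integral_smul, hAm, hBm, smul_zero, sub_zero]
  have hRX : cov[R, X; μ] = 0 := by
    rw [covariance_sub_smul_left hA hB hX, covariance_comm, hXA, covariance_comm, hXB, mul_zero,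
      sub_zero]
  have hRB : cov[R, B; μ] = 0 := by
    rw [covariance_sub_smul_left hA hB hB, div_mul_cancel₀ _ hBB, sub_self]
  have hXBm : μ[X + B] = 0 := by
    rw [integral_add' (hX.integrable one_le_two) (hB.integrable one_le_two), hXm, hBm, add_zero]
  refine ⟨hRm, ?_, ?_, ?_⟩
  · rw [← covariance_eq_integral_mul hRm hXm, hRX]
  · rw [← covariance_eq_integral_mul hRm hXBm, covariance_add_right hR hX hB, hRX, hRB, add_zero]
  · simp_rw [pow_two]
    rw [← covariance_eq_integral_mul hRm hRm, covariance_sub_smul_left hA hB hR,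
      covariance_comm B, hRB, mul_zero, sub_zero, covariance_comm,
      covariance_sub_smul_left hA hB hA, covariance_comm B, hβ]
    ring

end GramSchmidt

lemma covariance_noise_sums_of_indepFun {Ω : Type*} [MeasurableSpace Ω] {μ : Measure Ω}
    [IsProbabilityMeasure μ] {X T0 T1 T2 T3 : Ω → ℝ}
    (hX : MemLp X 2 μ) (hT0 : MemLp T0 2 μ) (hT1 : MemLp T1 2 μ)
    (hT2 : MemLp T2 2 μ) (hT3 : MemLp T3 2 μ)
    (h1 : IndepFun X T0 μ)
    (h2 : IndepFun (fun ω => (X ω, T0 ω)) (fun ω => (T1 ω, T2 ω)) μ)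
    (h3 : IndepFun (fun ω => (X ω, T0 ω, T1 ω, T2 ω)) T3 μ) :
    cov[X, T0 + T1; μ] = 0 ∧ cov[X, T0 + T2 + T3; μ] = 0 ∧
    cov[T0 + T1, T0 + T1; μ] = cov[T0, T0; μ] + cov[T1, T1; μ] ∧
    cov[T0 + T1, T0 + T2 + T3; μ] = cov[T0, T0; μ] + cov[T1, T2; μ] ∧
    cov[T0 + T2 + T3, T0 + T2 + T3; μ] = cov[T0, T0; μ] + cov[T2, T2; μ] + cov[T3, T3; μ] := by
  have cX0 : cov[X, T0; μ] = 0 := h1.covariance_eq_zero hX hT0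
  have cX1 : cov[X, T1; μ] = 0 := (h2.comp measurable_fst measurable_fst).covariance_eq_zero hX hT1
  have cX2 : cov[X, T2; μ] = 0 := (h2.comp measurable_fst measurable_snd).covariance_eq_zero hX hT2
  have c01 : cov[T0, T1; μ] = 0 :=
    (h2.comp measurable_snd measurable_fst).covariance_eq_zero hT0 hT1
  have c02 : cov[T0, T2; μ] = 0 :=
    (h2.comp measurable_snd measurable_snd).covariance_eq_zero hT0 hT2
  have cX3 : cov[X, T3; μ] = 0 := (h3.comp measurable_fst measurable_id).covariance_eq_zero hX hT3
  have c03 : cov[T0, T3; μ] = 0 :=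
    (h3.comp (measurable_fst.comp measurable_snd) measurable_id).covariance_eq_zero hT0 hT3
  have c13 : cov[T1, T3; μ] = 0 := (h3.comp (measurable_fst.comp (measurable_snd.comp
    measurable_snd)) measurable_id).covariance_eq_zero hT1 hT3
  have c23 : cov[T2, T3; μ] = 0 := (h3.comp (measurable_snd.comp (measurable_snd.comp
    measurable_snd)) measurable_id).covariance_eq_zero hT2 hT3
  -- `simp` discharges `MemLp` side goals only two `MemLp.add`s deep
  have hB : MemLp (T0 + T2 + T3) 2 μ := (hT0.add hT2).add hT3
  simp only [covariance_add_left, covariance_add_right, MemLp.add, hX, hT0, hT1, hT2, hT3, hB]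
  rw [covariance_comm T1 T0, covariance_comm T2 T0, covariance_comm T3 T0, covariance_comm T3 T2]
  simp only [cX0, cX1, cX2, cX3, c01, c02, c03, c13, c23]
  refine ⟨?_, ?_, ?_, ?_, ?_⟩ <;> ring

theorem gram_schmidt_residual_Bt3_general
    {Ω : Type*} [MeasurableSpace Ω] (μ : Measure Ω) [IsProbabilityMeasure μ]
    (σ2 D1 D2 D3 s0 s1 s2 s3 : ℝ)
    (hσ : 0 < σ2)
    (hD3pos : 0 < D3) (hD3leD1 : D3 ≤ D1) (hD1 : D1 < σ2)
    (hD3leD2 : D3 ≤ D2) (hD2 : D2 < σ2)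
    (hs0 : s0 = D3 * σ2 / (σ2 - D3))
    (hs1 : s1 = D1 * σ2 / (σ2 - D1) - s0)
    (hs2 : s2 = D2 * σ2 / (σ2 - D2) - s0)
    (hs3 : 0 ≤ s3)
    (X T0 T1 T2 T3 : Ω → ℝ)
    (hX2 : MemLp X 2 μ) (hT02 : MemLp T0 2 μ) (hT12 : MemLp T1 2 μ)
    (hT22 : MemLp T2 2 μ) (hT32 : MemLp T3 2 μ)
    (hXmean : ∫ ω, X ω ∂μ = 0) (hT0mean : ∫ ω, T0 ω ∂μ = 0)
    (hT1mean : ∫ ω, T1 ω ∂μ = 0) (hT2mean : ∫ ω, T2 ω ∂μ = 0)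
    (hT3mean : ∫ ω, T3 ω ∂μ = 0)
    (hT0var : ∫ ω, (T0 ω) ^ 2 ∂μ = s0)
    (hT1var : ∫ ω, (T1 ω) ^ 2 ∂μ = s1)
    (hT2var : ∫ ω, (T2 ω) ^ 2 ∂μ = s2)
    (hT3var : ∫ ω, (T3 ω) ^ 2 ∂μ = s3)
    (hT1T2 : ∫ ω, T1 ω * T2 ω ∂μ = -(Real.sqrt s1 * Real.sqrt s2))
    -- `X`, `T0` and the pair `(T1, T2)` are mutually independent
    (hIndep1 : IndepFun X T0 μ)
    (hIndep2 : IndepFun (fun ω => (X ω, T0 ω)) (fun ω => (T1 ω, T2 ω)) μ)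
    -- `T3` is independent of `(X, T0, T1, T2)`
    (hIndep3 : IndepFun (fun ω => (X ω, T0 ω, T1 ω, T2 ω)) T3 μ)
    (U1 U2 U2' : Ω → ℝ)
    (hU1 : U1 = fun ω => X ω + T0 ω + T1 ω)
    (hU2 : U2 = fun ω => X ω + T0 ω + T2 ω)
    (hU2' : U2' = fun ω => U2 ω + T3 ω)
    (b1 b2 : ℝ)
    (hb1 : b1 = (s2 + s3 + Real.sqrt s1 * Real.sqrt s2) / (s0 + s2 + s3))
    (hb2 : b2 = (s0 - Real.sqrt s1 * Real.sqrt s2) / (s0 + s2 + s3))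
    (Bt3 : Ω → ℝ)
    (hBt3 : Bt3 = fun ω => U1 ω - b1 * X ω - b2 * U2' ω) :
    (∫ ω, Bt3 ω ∂μ = 0) ∧
    (∫ ω, Bt3 ω * X ω ∂μ = 0) ∧
    (∫ ω, Bt3 ω * U2' ω ∂μ = 0) ∧
    (∫ ω, (Bt3 ω) ^ 2 ∂μ
      = (s0 * (Real.sqrt s1 + Real.sqrt s2) ^ 2 + s3 * (s0 + s1)) / (s0 + s2 + s3)) := by
  have hs0pos : 0 < s0 := hs0 ▸ div_pos (mul_pos hD3pos hσ) (by linarith)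
  have hs1 : 0 ≤ s1 := hs1 ▸ hs0 ▸ sub_nonneg.2 (mul_div_sub_le_mul_div_sub hσ hD3leD1 hD1)
  have hs2 : 0 ≤ s2 := hs2 ▸ hs0 ▸ sub_nonneg.2 (mul_div_sub_le_mul_div_sub hσ hD3leD2 hD2)
  have hd : 0 < s0 + s2 + s3 := by linarith
  have hvar : ∀ {T : Ω → ℝ}, μ[T] = 0 → cov[T, T; μ] = ∫ ω, T ω ^ 2 ∂μ := fun hT => by
    simp_rw [covariance_eq_integral_mul hT hT, pow_two]
  obtain ⟨hXA, hXB, hAA, hAB, hBB⟩ :=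
    covariance_noise_sums_of_indepFun hX2 hT02 hT12 hT22 hT32 hIndep1 hIndep2 hIndep3
  simp only [hvar hT0mean, hvar hT1mean, hvar hT2mean, hvar hT3mean, hT0var, hT1var, hT2var,
    hT3var, covariance_eq_integral_mul hT1mean hT2mean, hT1T2, ← sub_eq_add_neg] at hAA hAB hBB
  have hI : ∀ {T : Ω → ℝ}, MemLp T 2 μ → Integrable T μ := fun hT => hT.integrable one_le_two
  have hAm : μ[T0 + T1] = 0 := by rw [integral_add' (hI hT02) (hI hT12), hT0mean, hT1mean, add_zero]
  have hBm : μ[T0 + T2 + T3] = 0 := by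
    rw [integral_add' (hI (hT02.add hT22)) (hI hT32), integral_add' (hI hT02) (hI hT22), hT0mean,
      hT2mean, hT3mean, add_zero, add_zero]
  have hb : b1 + b2 = 1 := by
    rw [hb1, hb2, ← add_div, div_eq_one_iff_eq hd.ne']
    ring
  have hBt : Bt3 = T0 + T1 - b2 • (T0 + T2 + T3) := by
    ext ω
    simp only [hBt3, hU1, hU2', hU2, Pi.add_apply, Pi.sub_apply, Pi.smul_apply, smul_eq_mul]
    linear_combination (-X ω) * hb
  have hU : U2' = X + (T0 + T2 + T3) := by
    ext ω
    simp only [hU2', hU2, Pi.add_apply, add_assoc]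
  obtain ⟨h1, h2, h3, h4⟩ := integral_gramSchmidt_residual hX2 (hT02.add hT12)
    ((hT02.add hT22).add hT32) hXmean hAm hBm hXA hXB (hBB ▸ hd.ne')
  rw [hBt, hU, hb2, ← hAB, ← hBB]
  refine ⟨h1, h2, h3, h4.trans ?_⟩
  rw [hAA, hAB, hBB, eq_div_iff hd.ne', sub_mul, div_mul_cancel₀ _ hd.ne']
  linear_combination (-(s0 + √s2 ^ 2)) * Real.sq_sqrt hs1 - (s0 + s1) * Real.sq_sqrt hs2

/-- `B̃3 = U1 − b1·X − b2·U'2` is the Gram–Schmidt residual of `U1` against `(X, U'2)`: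
it has mean zero, is uncorrelated with `X` and `U'2`, and its variance is the linear
MMSE error `(s0·(σT1+σT2)² + s3·(s0+s1))/(s0+s2+s3)`. -/
theorem gram_schmidt_residual_Bt3
    {Ω : Type*} [MeasurableSpace Ω] (μ : Measure Ω) [IsProbabilityMeasure μ]
    (σ2 D1 D2 D3 s0 s1 s2 s3 : ℝ)
    (hσ : 0 < σ2)
    (hD3pos : 0 < D3) (hD3leD1 : D3 ≤ D1) (hD1 : D1 < σ2)
    (hD3leD2 : D3 ≤ D2) (hD2 : D2 < σ2)
    (hs0 : s0 = D3 * σ2 / (σ2 - D3))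
    (hs1 : s1 = D1 * σ2 / (σ2 - D1) - s0)
    (hs2 : s2 = D2 * σ2 / (σ2 - D2) - s0)
    (hs3 : 0 ≤ s3)
    (X T0 T1 T2 T3 : Ω → ℝ)
    (hX2 : MemLp X 2 μ) (hT02 : MemLp T0 2 μ) (hT12 : MemLp T1 2 μ)
    (hT22 : MemLp T2 2 μ) (hT32 : MemLp T3 2 μ)
    (hXmean : ∫ ω, X ω ∂μ = 0) (hT0mean : ∫ ω, T0 ω ∂μ = 0)
    (hT1mean : ∫ ω, T1 ω ∂μ = 0) (hT2mean : ∫ ω, T2 ω ∂μ = 0)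
    (hT3mean : ∫ ω, T3 ω ∂μ = 0)
    (hXvar : ∫ ω, (X ω) ^ 2 ∂μ = σ2)
    (hT0var : ∫ ω, (T0 ω) ^ 2 ∂μ = s0)
    (hT1var : ∫ ω, (T1 ω) ^ 2 ∂μ = s1)
    (hT2var : ∫ ω, (T2 ω) ^ 2 ∂μ = s2)
    (hT3var : ∫ ω, (T3 ω) ^ 2 ∂μ = s3)
    (hT1T2 : ∫ ω, T1 ω * T2 ω ∂μ = -(Real.sqrt s1 * Real.sqrt s2))
    -- `X`, `T0` and the pair `(T1, T2)` are mutually independent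
    (hIndep1 : IndepFun X T0 μ)
    (hIndep2 : IndepFun (fun ω => (X ω, T0 ω)) (fun ω => (T1 ω, T2 ω)) μ)
    -- `T3` is independent of `(X, T0, T1, T2)`
    (hIndep3 : IndepFun (fun ω => (X ω, T0 ω, T1 ω, T2 ω)) T3 μ)
    (U1 U2 U2' : Ω → ℝ)
    (hU1 : U1 = fun ω => X ω + T0 ω + T1 ω)
    (hU2 : U2 = fun ω => X ω + T0 ω + T2 ω)
    (hU2' : U2' = fun ω => U2 ω + T3 ω)
    (b1 b2 : ℝ)
    (hb1 : b1 = (s2 + s3 + Real.sqrt s1 * Real.sqrt s2) / (s0 + s2 + s3))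
    (hb2 : b2 = (s0 - Real.sqrt s1 * Real.sqrt s2) / (s0 + s2 + s3))
    (Bt3 : Ω → ℝ)
    (hBt3 : Bt3 = fun ω => U1 ω - b1 * X ω - b2 * U2' ω) :
    (∫ ω, Bt3 ω ∂μ = 0) ∧
    (∫ ω, Bt3 ω * X ω ∂μ = 0) ∧
    (∫ ω, Bt3 ω * U2' ω ∂μ = 0) ∧
    (∫ ω, (Bt3 ω) ^ 2 ∂μ
      = (s0 * (Real.sqrt s1 + Real.sqrt s2) ^ 2 + s3 * (s0 + s1)) / (s0 + s2 + s3)) :=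
  gram_schmidt_residual_Bt3_general μ σ2 D1 D2 D3 s0 s1 s2 s3 hσ hD3pos hD3leD1 hD1 hD3leD2 hD2 hs0
    hs1 hs2 hs3 X T0 T1 T2 T3 hX2 hT02 hT12 hT22 hT32 hXmean hT0mean hT1mean hT2mean hT3mean hT0var
    hT1var hT2var hT3var hT1T2 hIndep1 hIndep2 hIndep3 U1 U2 U2' hU1 hU2 hU2' b1 b2 hb1 hb2 Bt3 hBt3
end

section
/- Let n ≥ 1, M ≥ 2, and let X_1, …, X_M be zero-mean square-integrable ℝⁿ-valued random vectors whose joint (Mn)×(Mn) block covariance matrix K = (E[X_i X_j^T])_{i,j} is positive definite. For i = 2, …, M let K̃_{i−1} be the n×((i−1)n) matrix K̃_{i−1} = Cov(X_i, (X_1,…,X_{i−1})) · Cov((X_1,…,X_{i−1}))^{−1}, and let B_i = X_i − K̃_{i−1}(X_1,…,X_{i−1}) be the block Gram–Schmidt residual. Let N_2, …, N_M be zero-mean square-integrable ℝⁿ-valued random vectors with E[N_i N_i^T] = E[B_i B_i^T] for each i, such that X_1, N_2, …, N_M are mutually independent. Define X̃_1 = X_1 and X̃_i = K̃_{i−1}(X̃_1,…,X̃_{i−1})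 + N_i for i = 2, …, M. Then E[X̃_i X̃_j^T] = E[X_i X_j^T] for all i, j, i.e. the block covariance matrix of (X̃_1, …, X̃_M) equals K. -/
/-!
Stack the blocks into vectors indexed by `Fin M × Fin n` and let `L` be the strictly
block-lower-triangular matrix of the coefficients `C`. Both `X` and `X̃` solve `v = L v + r`,
with residuals `r = B` and `r = (X 0, N 1, …, N (M-1))` respectively; since `1 - L` is
unitriangular, each second-moment matrix equals `(1 - L)⁻¹ R (1 - L)⁻ᵀ`, where `R` is that of
the residuals. So it suffices that the two residual matrices agree. Both are block diagonal: for
the noises by independence, for `B` because the normal equations make `(1 - L) K` vanish below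
the block diagonal, so that `(1 - L) K (1 - L)ᵀ` is block upper triangular and symmetric. Their
diagonal blocks agree by the choice of the noise covariances, and because `B 0 = X 0`.
-/

open MeasureTheory ProbabilityTheory Matrix Finset

namespace Matrix

theorem IsSymm.apply_eq_zero_of_blockTriangular {m α R : Type*} [LinearOrder α] [Zero R]
    {S : Matrix m m R} {b : m → α} (hS : S.IsSymm) (hb : S.BlockTriangular b) {p q : m}
    (hpq : b p ≠ b q) : S p q = 0 := by
  rcases hpq.lt_or_gt with h | h
  · rw [← hS.apply]
    exact hb h
  · exact hb h

theorem one_sub_mulVec_eq_of_eq_mulVec_add {ι R : Type*} [Fintype ι] [DecidableEq ι]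
    [CommRing R] {L : Matrix ι ι R} {y r : ι → R} (hy : y = L *ᵥ y + r) :
    (1 - L) *ᵥ y = r := by
  rw [sub_mulVec, one_mulVec]
  exact (eq_sub_of_add_eq' hy.symm).symm

section StrictLowerBlocks

variable {m n R : Type*} [LinearOrder m]

def strictLowerBlocks [Zero R] (C : m → m → Matrix n n R) : Matrix m m (Matrix n n R) :=
  of fun i j => if j < i then C i j else 0

variable [CommRing R]

theorem comp_strictLowerBlocks_mulVec [Fintype m] [LocallyFiniteOrderBot m] [Fintype n]
    (C : m → m → Matrix n n R) (v : m × n → R) (i : m) (a : n) :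
    (comp m m n n R (strictLowerBlocks C) *ᵥ v) (i, a) =
      ∑ j ∈ Iio i, ∑ b, C i j a b * v (j, b) := by
  simp only [strictLowerBlocks, mulVec, dotProduct, Fintype.sum_prod_type, comp_apply, of_apply]
  rw [← Finset.filter_gt_eq_Iio, Finset.sum_filter]
  refine Finset.sum_congr rfl fun j _ => ?_
  split_ifs <;> simp

theorem strictLowerBlocks_mul_apply [Fintype m] [LocallyFiniteOrderBot m] [Fintype n]
    (C K : m → m → Matrix n n R) (i k : m) :
    (strictLowerBlocks C * of K) i k = ∑ j ∈ Iio i, C i j * K j k := by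
  simp [strictLowerBlocks, mul_apply, ite_mul, Finset.sum_ite, Finset.filter_gt_eq_Iio]

theorem det_one_sub_comp_strictLowerBlocks [Fintype m] [Fintype n] [DecidableEq n]
    (C : m → m → Matrix n n R) :
    (1 - comp m m n n R (strictLowerBlocks C)).det = 1 := by
  have h : (1 - comp m m n n R (strictLowerBlocks C)).BlockTriangular
      (OrderDual.toDual ∘ Prod.fst) := by
    intro p q hpq
    have hpq : p.1 < q.1 := hpq
    simp [strictLowerBlocks, hpq.not_gt, Prod.ext_iff, hpq.ne]
  rw [h.det_fintype]
  refine Finset.prod_eq_one fun k _ => ?_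
  have hk : (1 - comp m m n n R (strictLowerBlocks C)).toSquareBlock
      (OrderDual.toDual ∘ Prod.fst) k = 1 := by
    ext ⟨p, hp⟩ ⟨q, hq⟩
    have : p.1 = q.1 := hp.trans hq.symm
    simp [toSquareBlock_def, strictLowerBlocks, this, one_apply, Prod.ext_iff]
  rw [hk, det_one]

theorem blockTriangular_transpose_one_sub_comp_strictLowerBlocks [DecidableEq n]
    (C : m → m → Matrix n n R) :
    (1 - comp m m n n R (strictLowerBlocks C))ᵀ.BlockTriangular Prod.fst := by
  intro p q hpq
  simp [strictLowerBlocks, hpq.not_gt, Prod.ext_iff, hpq.ne]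

theorem blockTriangular_one_sub_mul_mul_transpose [Fintype m] [LocallyFiniteOrderBot m]
    [Fintype n] [DecidableEq n] {C K : m → m → Matrix n n R}
    (hC : ∀ i k, k < i → ∑ j ∈ Iio i, C i j * K j k = K i k) :
    ((1 - comp m m n n R (strictLowerBlocks C)) * comp m m n n R (of K) *
      (1 - comp m m n n R (strictLowerBlocks C))ᵀ).BlockTriangular Prod.fst := by
  have h : ((1 - strictLowerBlocks C) * of K).BlockTriangular id := by
    intro i k hki
    simp [sub_mul, strictLowerBlocks_mul_apply, hC i k hki]
  have h' := h.comp
  simp only [← compRingEquiv_apply, map_mul, map_sub, map_one] at h'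
  exact h'.mul (blockTriangular_transpose_one_sub_comp_strictLowerBlocks C)

end StrictLowerBlocks

end Matrix

section Stacking

variable {Ω m n : Type*}

def stackedVector (Y : m → Ω → n → ℝ) : Ω → m × n → ℝ :=
  fun ω p => Y p.1 ω p.2

theorem stackedVector_eq_mulVec_add [LinearOrder m] [Fintype m] [LocallyFiniteOrderBot m]
    [Fintype n] {C : m → m → Matrix n n ℝ} {Y R : m → Ω → n → ℝ}
    (h : ∀ i ω a, Y i ω a = ∑ j ∈ Iio i, ∑ b, C i j a b * Y j ω b + R i ω a) (ω : Ω) :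
    stackedVector Y ω =
      comp m m n n ℝ (strictLowerBlocks C) *ᵥ stackedVector Y ω + stackedVector R ω := by
  funext ⟨i, a⟩
  rw [Pi.add_apply, comp_strictLowerBlocks_mulVec]
  exact h i ω a

end Stacking

section SecondMoment

variable {Ω ι κ m n : Type*} [MeasurableSpace Ω] {μ : Measure Ω}

noncomputable def secondMomentMatrix (μ : Measure Ω) (V : Ω → ι → ℝ) : Matrix ι ι ℝ :=
  of fun p q => ∫ ω, V ω p * V ω q ∂μ

theorem isSymm_secondMomentMatrix (V : Ω → ι → ℝ) : (secondMomentMatrix μ V).IsSymm :=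
  IsSymm.ext fun p q => by simp only [secondMomentMatrix, of_apply, mul_comm]

theorem secondMomentMatrix_mulVec [Fintype ι] {V : Ω → ι → ℝ}
    (hV : ∀ p, MemLp (fun ω => V ω p) 2 μ) (T : Matrix κ ι ℝ) :
    secondMomentMatrix μ (fun ω => T *ᵥ V ω) = T * secondMomentMatrix μ V * Tᵀ := by
  ext p q
  have hint : ∀ k l, Integrable (fun ω => T p k * T q l * (V ω k * V ω l)) μ :=
    fun k l => ((hV k).integrable_mul (hV l)).const_mul _
  calc ∫ ω, (T *ᵥ V ω) p * (T *ᵥ V ω) q ∂μ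
      = ∫ ω, ∑ k, ∑ l, T p k * T q l * (V ω k * V ω l) ∂μ := by
        simp only [mulVec, dotProduct, Finset.sum_mul_sum, mul_mul_mul_comm]
    _ = ∑ k, ∑ l, T p k * T q l * ∫ ω, V ω k * V ω l ∂μ := by
        rw [integral_finsetSum _ fun k _ => integrable_finsetSum _ fun l _ => hint k l]
        simp only [integral_finsetSum _ fun l _ => hint _ l, integral_const_mul]
    _ = (T * secondMomentMatrix μ V * Tᵀ) p q := by
        simp only [mul_apply, transpose_apply, secondMomentMatrix, of_apply, Finset.sum_mul]
        rw [Finset.sum_comm]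
        exact Finset.sum_congr rfl fun k _ => Finset.sum_congr rfl fun l _ => by ring

theorem secondMomentMatrix_eq_one_sub_mul_mul_transpose [Fintype ι] [DecidableEq ι]
    {L : Matrix ι ι ℝ} {y r : Ω → ι → ℝ} (hy2 : ∀ p, MemLp (fun ω => y ω p) 2 μ)
    (hy : ∀ ω, y ω = L *ᵥ y ω + r ω) :
    secondMomentMatrix μ r = (1 - L) * secondMomentMatrix μ y * (1 - L)ᵀ := by
  rw [← secondMomentMatrix_mulVec hy2]
  exact congrArg _ (funext fun ω => (one_sub_mulVec_eq_of_eq_mulVec_add (hy ω)).symm)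

theorem secondMomentMatrix_eq_inv_mul_mul_transpose [Fintype ι] [DecidableEq ι]
    {L : Matrix ι ι ℝ} (hL : IsUnit (1 - L).det) {y r : Ω → ι → ℝ}
    (hr2 : ∀ p, MemLp (fun ω => r ω p) 2 μ) (hy : ∀ ω, y ω = L *ᵥ y ω + r ω) :
    secondMomentMatrix μ y = (1 - L)⁻¹ * secondMomentMatrix μ r * (1 - L)⁻¹ᵀ := by
  rw [← secondMomentMatrix_mulVec hr2]
  refine congrArg _ (funext fun ω => ?_)
  rw [← one_sub_mulVec_eq_of_eq_mulVec_add (hy ω), mulVec_mulVec, nonsing_inv_mul _ hL,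
    one_mulVec]

theorem secondMomentMatrix_eq_of_eq_mulVec_add [Fintype ι] [DecidableEq ι] {L : Matrix ι ι ℝ}
    (hL : IsUnit (1 - L).det) {x y r s : Ω → ι → ℝ} (hx2 : ∀ p, MemLp (fun ω => x ω p) 2 μ)
    (hs2 : ∀ p, MemLp (fun ω => s ω p) 2 μ) (hx : ∀ ω, x ω = L *ᵥ x ω + r ω)
    (hy : ∀ ω, y ω = L *ᵥ y ω + s ω) (hrs : secondMomentMatrix μ s = secondMomentMatrix μ r) :
    secondMomentMatrix μ y = secondMomentMatrix μ x := by
  rw [secondMomentMatrix_eq_inv_mul_mul_transpose hL hs2 hy, hrs,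
    secondMomentMatrix_eq_one_sub_mul_mul_transpose hx2 hx, ← Matrix.mul_assoc,
    ← Matrix.mul_assoc, nonsing_inv_mul _ hL, Matrix.one_mul, Matrix.mul_assoc, ← transpose_mul,
    nonsing_inv_mul _ hL, transpose_one, Matrix.mul_one]

theorem memLp_stackedVector_apply [Fintype n] {Y : m → Ω → n → ℝ} (hY : ∀ i, MemLp (Y i) 2 μ)
    (p : m × n) :
    MemLp (fun ω => stackedVector Y ω p) 2 μ :=
  (ContinuousLinearMap.proj (R := ℝ) (φ := fun _ : n => ℝ) p.2).comp_memLp' (hY p.1)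

theorem secondMomentMatrix_stackedVector_apply_eq_zero [Fintype n] {Z : m → Ω → n → ℝ}
    (hZ : iIndepFun Z μ) (hZ2 : ∀ i, MemLp (Z i) 2 μ) (hmean : ∀ i a, ∫ ω, Z i ω a ∂μ = 0)
    {p q : m × n} (hpq : p.1 ≠ q.1) :
    secondMomentMatrix μ (stackedVector Z) p q = 0 := by
  have hind := (hZ.indepFun hpq).comp (measurable_pi_apply p.2) (measurable_pi_apply q.2)
  simpa [secondMomentMatrix, stackedVector, hmean] using
    hind.integral_mul_eq_mul_integral (memLp_stackedVector_apply hZ2 p).aestronglyMeasurable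
      (memLp_stackedVector_apply hZ2 q).aestronglyMeasurable

theorem secondMomentMatrix_stackedVector_residual_apply_eq_zero [LinearOrder m] [Fintype m]
    [LocallyFiniteOrderBot m] [Fintype n] [DecidableEq n] {X B : m → Ω → n → ℝ}
    {C K : m → m → Matrix n n ℝ} (hX2 : ∀ i, MemLp (X i) 2 μ)
    (hK : ∀ i j a b, K i j a b = ∫ ω, X i ω a * X j ω b ∂μ)
    (hC : ∀ i k, k < i → ∑ j ∈ Iio i, C i j * K j k = K i k)
    (hX : ∀ ω, stackedVector X ω =
      comp m m n n ℝ (strictLowerBlocks C) *ᵥ stackedVector X ω + stackedVector B ω)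
    {p q : m × n} (hpq : p.1 ≠ q.1) :
    secondMomentMatrix μ (stackedVector B) p q = 0 := by
  have hSX : secondMomentMatrix μ (stackedVector X) = comp m m n n ℝ (of K) :=
    Matrix.ext fun p q => (hK ..).symm
  have hSB := secondMomentMatrix_eq_one_sub_mul_mul_transpose (memLp_stackedVector_apply hX2) hX
  rw [hSX] at hSB
  exact (isSymm_secondMomentMatrix _).apply_eq_zero_of_blockTriangular
    (hSB ▸ blockTriangular_one_sub_mul_mul_transpose hC) hpq

end SecondMoment

theorem sequential_quantization_reproduces_covariance_vector_general
    {Ω : Type*} [MeasurableSpace Ω] (μ : Measure Ω)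
    (n : ℕ) (M : ℕ) [NeZero M]
    (X : Fin M → Ω → (Fin n → ℝ))
    (hX2 : ∀ i, MemLp (X i) 2 μ)
    (hXmean : ∀ i a, ∫ ω, X i ω a ∂μ = 0)
    -- the block covariance matrices `K i j = E[X i (X j)^T]`
    (K : Fin M → Fin M → Matrix (Fin n) (Fin n) ℝ)
    (hK : ∀ i j a b, K i j a b = ∫ ω, X i ω a * X j ω b ∂μ)
    -- `C i` is the block row of linear MMSE coefficient matrices of `X i` given
    -- `X 0, …, X (i-1)`, characterized by the block normal equations (which determine
    -- it uniquely since the joint covariance matrix is positive definite).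
    (C : Fin M → Fin M → Matrix (Fin n) (Fin n) ℝ)
    (hC : ∀ i k : Fin M, k < i →
      ∑ j ∈ Finset.Iio i, C i j * K j k = K i k)
    -- the block Gram–Schmidt residuals
    (B : Fin M → Ω → (Fin n → ℝ))
    (hB : ∀ i : Fin M, B i = fun ω a =>
      X i ω a - ∑ j ∈ Finset.Iio i, ∑ b, C i j a b * X j ω b)
    -- the independent noises, with `E[N i (N i)^T] = E[B i (B i)^T]`
    (N : Fin M → Ω → (Fin n → ℝ))
    (hN2 : ∀ i, MemLp (N i) 2 μ)
    (hNmean : ∀ i a, ∫ ω, N i ω a ∂μ = 0)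
    (hNcov : ∀ i : Fin M, 0 < i → ∀ a b,
      ∫ ω, N i ω a * N i ω b ∂μ = ∫ ω, B i ω a * B i ω b ∂μ)
    -- `X 0, N 1, …, N (M-1)` are mutually independent
    (hIndep : iIndepFun
      (fun i : Fin M => if i = 0 then X 0 else N i) μ)
    -- the sequentially generated process
    (Xt : Fin M → Ω → (Fin n → ℝ))
    (hXt0 : Xt 0 = X 0)
    (hXtrec : ∀ i : Fin M, 0 < i →
      Xt i = fun ω a => (∑ j ∈ Finset.Iio i, ∑ b, C i j a b * Xt j ω b) + N i ω a) :
    ∀ i j a b, ∫ ω, Xt i ω a * Xt j ω b ∂μ = K i j a b := by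
  have hIio : Finset.Iio (0 : Fin M) = ∅ := Finset.Iio_eq_empty.mpr fun b _ => Fin.zero_le b
  set L := comp (Fin M) (Fin M) (Fin n) (Fin n) ℝ (strictLowerBlocks C)
  set Z : Fin M → Ω → Fin n → ℝ := fun i => if i = 0 then X 0 else N i
  have hZ2 : ∀ i, MemLp (Z i) 2 μ := fun i => by by_cases hi : i = 0 <;> simp [Z, hi, hX2, hN2]
  have hZmean : ∀ i a, ∫ ω, Z i ω a ∂μ = 0 := fun i => by
    by_cases hi : i = 0 <;> simp [Z, hi, hXmean, hNmean]
  have hX : ∀ ω, stackedVector X ω = L *ᵥ stackedVector X ω + stackedVector B ω :=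
    stackedVector_eq_mulVec_add fun i ω a => by rw [hB]; ring
  have hXt : ∀ ω, stackedVector Xt ω = L *ᵥ stackedVector Xt ω + stackedVector Z ω := by
    refine stackedVector_eq_mulVec_add fun i ω a => ?_
    rcases eq_or_ne i 0 with rfl | hi
    · simp [hXt0, Z, hIio]
    · simp [hXtrec i (Fin.pos_iff_ne_zero.mpr hi), Z, hi]
  have hSZ : secondMomentMatrix μ (stackedVector Z) = secondMomentMatrix μ (stackedVector B) := by
    ext ⟨i, a⟩ ⟨k, b⟩
    rcases eq_or_ne i k with rfl | hik
    · rcases eq_or_ne i 0 with rfl | hi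
      · simp [secondMomentMatrix, stackedVector, Z, hB, hIio]
      · simpa [secondMomentMatrix, stackedVector, Z, hi] using
          hNcov i (Fin.pos_iff_ne_zero.mpr hi) a b
    · rw [secondMomentMatrix_stackedVector_apply_eq_zero hIndep hZ2 hZmean hik,
        secondMomentMatrix_stackedVector_residual_apply_eq_zero hX2 hK hC hX hik]
  have hL : IsUnit (1 - L).det := by rw [det_one_sub_comp_strictLowerBlocks]; exact isUnit_one
  have hSXt := secondMomentMatrix_eq_of_eq_mulVec_add hL (memLp_stackedVector_apply hX2)
    (memLp_stackedVector_apply hZ2) hX hXt hSZ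
  intro i j a b
  simpa [secondMomentMatrix, stackedVector, hK] using congrFun (congrFun hSXt (i, a)) (j, b)

/-- Gram–Schmidt orthogonalization vs. sequential (dithered) quantization, vector case:
a sequential additive-independent-noise system driven by the ℝⁿ-valued vector `X 0`,
with noise covariances matching the block Gram–Schmidt residual covariances,
reproduces the prescribed block covariance matrix `K`. -/
theorem sequential_quantization_reproduces_covariance_vector
    {Ω : Type*} [MeasurableSpace Ω] (μ : Measure Ω) [IsProbabilityMeasure μ]
    (n : ℕ) (hn : 1 ≤ n) (M : ℕ) (hM : 2 ≤ M) [NeZero M]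
    (X : Fin M → Ω → (Fin n → ℝ))
    (hX2 : ∀ i, MemLp (X i) 2 μ)
    (hXmean : ∀ i a, ∫ ω, X i ω a ∂μ = 0)
    -- the block covariance matrices `K i j = E[X i (X j)^T]`
    (K : Fin M → Fin M → Matrix (Fin n) (Fin n) ℝ)
    (hK : ∀ i j a b, K i j a b = ∫ ω, X i ω a * X j ω b ∂μ)
    -- the joint (Mn)×(Mn) block covariance matrix is positive definite
    (hKpd : Matrix.PosDef (fun p q : Fin M × Fin n => K p.1 q.1 p.2 q.2))
    -- `C i` is the block row of linear MMSE coefficient matrices of `X i` given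
    -- `X 0, …, X (i-1)`, characterized by the block normal equations (which determine
    -- it uniquely since the joint covariance matrix is positive definite).
    (C : Fin M → Fin M → Matrix (Fin n) (Fin n) ℝ)
    (hC : ∀ i k : Fin M, k < i →
      ∑ j ∈ Finset.Iio i, C i j * K j k = K i k)
    -- the block Gram–Schmidt residuals
    (B : Fin M → Ω → (Fin n → ℝ))
    (hB : ∀ i : Fin M, B i = fun ω a =>
      X i ω a - ∑ j ∈ Finset.Iio i, ∑ b, C i j a b * X j ω b)
    -- the independent noises, with `E[N i (N i)^T] = E[B i (B i)^T]`
    (N : Fin M → Ω → (Fin n → ℝ))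
    (hN2 : ∀ i, MemLp (N i) 2 μ)
    (hNmean : ∀ i a, ∫ ω, N i ω a ∂μ = 0)
    (hNcov : ∀ i : Fin M, 0 < i → ∀ a b,
      ∫ ω, N i ω a * N i ω b ∂μ = ∫ ω, B i ω a * B i ω b ∂μ)
    -- `X 0, N 1, …, N (M-1)` are mutually independent
    (hIndep : iIndepFun
      (fun i : Fin M => if i = 0 then X 0 else N i) μ)
    -- the sequentially generated process
    (Xt : Fin M → Ω → (Fin n → ℝ))
    (hXt0 : Xt 0 = X 0)
    (hXtrec : ∀ i : Fin M, 0 < i →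
      Xt i = fun ω a => (∑ j ∈ Finset.Iio i, ∑ b, C i j a b * Xt j ω b) + N i ω a) :
    ∀ i j a b, ∫ ω, Xt i ω a * Xt j ω b ∂μ = K i j a b :=
  sequential_quantization_reproduces_covariance_vector_general μ n M X hX2 hXmean K hK C hC B hB N
    hN2 hNmean hNcov hIndep Xt hXt0 hXtrec
end
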